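/- arXiv:2507.02382 — 6 statements merged into one kernel-verified Lean document; each statement's English description precedes it below -/
import Mathlib

section
/- Every tame persistence module of finite type decomposes as a finite direct sum of half-open interval modules I_{[s_i, t_i)} (with t_i possibly infinite). -/
open CategoryTheory CategoryTheory.Limits NNReal
open scoped ENNReal

abbrev PMod := ℝ≥0 ⥤ ModuleCat ℚ

def Discretizes (V : PMod) (ts : Finset ℝ≥0) : Prop :=
  ∀ a b : ℝ≥0, ∀ h : a ≤ b, (¬ ∃ c ∈ ts, a < c ∧ c ≤ b) → IsIso (V.map (homOfLE h))

def Tame (V : PMod) : Prop := ∃ ts : Finset ℝ≥0, Discretizes V ts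

def IsInterval (V : PMod) (s : ℝ≥0∞) (t : ℝ≥0∞) : Prop :=
  (∀ r : ℝ≥0, s ≤ (r : ℝ≥0∞) → (r : ℝ≥0∞) < t → Module.finrank ℚ (V.obj r) = 1) ∧
  (∀ r : ℝ≥0, ¬ (s ≤ (r : ℝ≥0∞) ∧ (r : ℝ≥0∞) < t) → Subsingleton (V.obj r)) ∧
  (∀ a b : ℝ≥0, ∀ h : a ≤ b, s ≤ (a : ℝ≥0∞) → (b : ℝ≥0∞) < t →
    IsIso (V.map (homOfLE h)))

def FiniteType (V : PMod) : Prop := ∀ r : ℝ≥0, FiniteDimensional ℚ (V.obj r)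

attribute [local instance] CategoryTheory.Abelian.hasFiniteBiproducts

/-!
Pick sample points `0 = p₀ < ⋯ < p_N` containing the critical values of `V`; since `V` is
constant between consecutive samples, everything is decided at the samples. There bars are split
off one at a time. Let `x ≠ 0` lie at the first sample `s` where the current invariant family `U`
is nonzero, and let `e` be the last sample before `x` dies. A functional `φ` on `V e` that does
not vanish on the image of `x`, pulled back along the structure maps, cuts `U` down to an
invariant complement of the line through `x` at every sample in `[s, e]`; below `s` it cuts
nothing because `U` vanishes there (an interval starting where the module starts is injective).
The total dimension over the samples drops, so induction yields bars whose lines give an internal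
direct sum decomposition of every `V r`, and a levelwise internal direct sum of subfunctors is a
biproduct.
-/

namespace DirectSum.IsInternal

variable {R : Type*} [Ring R] {M M' : Type*} [AddCommGroup M] [Module R M]
  [AddCommGroup M'] [Module R M'] {ι : Type*} [DecidableEq ι] {A : ι → Submodule R M}
  (h : IsInternal A)
include h

noncomputable def proj (i : ι) : M →ₗ[R] A i :=
  component R ι (fun i => A i) i ∘ₗ (LinearEquiv.ofBijective (coeLinearMap A) h).symm.toLinearMap

lemma proj_of_mem {i : ι} {x : M} (hx : x ∈ A i) : h.proj i x = ⟨x, hx⟩ :=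
  h.ofBijective_coeLinearMap_of_mem hx

lemma proj_of_mem_ne {i j : ι} (hij : i ≠ j) {x : M} (hx : x ∈ A i) : h.proj j x = 0 :=
  h.ofBijective_coeLinearMap_of_mem_ne hij hx

lemma sum_proj [Fintype ι] (x : M) : ∑ i, (h.proj i x : M) = x := by
  conv_rhs => rw [← (LinearEquiv.ofBijective (coeLinearMap A) h).apply_symm_apply x,
    ← sum_univ_of ((LinearEquiv.ofBijective (coeLinearMap A) h).symm x)]
  rw [map_sum]
  exact Finset.sum_congr rfl fun i _ => (coeLinearMap_of A i _).symm

lemma proj_map [Fintype ι] {A' : ι → Submodule R M'} (h' : IsInternal A') (f : M →ₗ[R] M')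
    (hf : ∀ i, (A i).map f ≤ A' i) (i : ι) (x : M) :
    (h'.proj i (f x) : M') = f (h.proj i x) := by
  have hmem : ∀ j, f (h.proj j x) ∈ A' j := fun j => hf j ⟨_, (h.proj j x).2, rfl⟩
  conv_lhs => rw [← h.sum_proj x, map_sum, map_sum]
  rw [Submodule.coe_sum, Finset.sum_eq_single i, h'.proj_of_mem (hmem i)]
  · intro j _ hji
    rw [h'.proj_of_mem_ne hji (hmem j), ZeroMemClass.coe_zero]
  · simp

lemma map_linearEquiv (e : M ≃ₗ[R] M') : IsInternal fun i => (A i).map (e : M →ₗ[R] M') := by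
  rw [isInternal_submodule_iff_iSupIndep_and_iSup_eq_top] at h ⊢
  refine ⟨h.1.map_orderIso (Submodule.orderIsoMapComap e), ?_⟩
  rw [← Submodule.map_iSup, h.2, Submodule.map_top, LinearEquiv.range]

end DirectSum.IsInternal

theorem iSupIndep.option_elim {α ι : Type*} [CompleteLattice α] [IsModularLattice α]
    {W : ι → α} (hW : iSupIndep W) {a : α} (ha : Disjoint a (⨆ i, W i)) :
    iSupIndep fun o : Option ι => o.elim a W := by
  rintro (_ | i)
  · refine ha.mono_right (iSup₂_le fun o ho => ?_)
    cases o with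
    | none => exact absurd rfl ho
    | some j => exact le_iSup W j
  · have hle : (⨆ (o : Option ι) (_ : o ≠ some i), o.elim a W) ≤ a ⊔ ⨆ (j) (_ : j ≠ i), W j := by
      refine iSup₂_le fun o ho => ?_
      cases o with
      | none => exact le_sup_left
      | some j => exact le_sup_of_le_right (le_iSup₂_of_le j (fun h => ho (h ▸ rfl)) le_rfl)
    refine (Disjoint.disjoint_sup_right_of_disjoint_sup_left (hW i) ?_).mono_right
      (hle.trans_eq (sup_comm _ _))
    exact (ha.mono_right (sup_le (le_iSup W i) (iSup₂_le fun j _ => le_iSup W j))).symm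

lemma Submodule.disjoint_span_singleton_inf_ker_and_sup_eq {K M : Type*} [Field K]
    [AddCommGroup M] [Module K M] {U : Submodule K M} {x : M} (hx : x ∈ U)
    {f : M →ₗ[K] K} (hf : f x ≠ 0) :
    Disjoint (K ∙ x) (U ⊓ LinearMap.ker f) ∧ K ∙ x ⊔ U ⊓ LinearMap.ker f = U := by
  refine ⟨((disjoint_span_singleton' fun h => hf (by simp [h])).mpr hf).symm.mono_right
    inf_le_right, ?_⟩
  rw [inf_comm, ← sup_inf_assoc_of_le _ ((span_singleton_le_iff_mem _ _).mpr hx),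
    LinearMap.span_singleton_sup_ker_eq_top f hf, top_inf_eq]

lemma Finset.exists_ennreal_le_coe_iff (Z : Finset ℝ≥0) :
    ∃ d : ℝ≥0∞, ∀ r : ℝ≥0, d ≤ r ↔ ∃ q ∈ Z, q ≤ r :=
  ⟨Z.inf fun q => (q : ℝ≥0∞), fun r => by
    simp [Finset.inf_le_iff ENNReal.coe_lt_top]⟩

lemma Finset.exists_first {α : Type*} [LinearOrder α] {P : Finset α} {Q : α → Prop}
    (h : ∃ p ∈ P, Q p) : ∃ s ∈ P, Q s ∧ ∀ q ∈ P, q < s → ¬Q q := by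
  classical
  obtain ⟨s, hs, hmin⟩ := (P.filter Q).exists_min_image id
    (by simpa [Finset.Nonempty] using h)
  rw [Finset.mem_filter] at hs
  exact ⟨s, hs.1, hs.2, fun q hq hqs hQ => hqs.not_ge (hmin q (Finset.mem_filter.mpr ⟨hq, hQ⟩))⟩

lemma Finset.exists_last_lt {P : Finset ℝ≥0} {s : ℝ≥0} (hs : s ∈ P) {d : ℝ≥0∞}
    (hsd : (s : ℝ≥0∞) < d) :
    ∃ e ∈ P, s ≤ e ∧ ∀ p ∈ P, s ≤ p → (p ≤ e ↔ (p : ℝ≥0∞) < d) := by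
  classical
  set A := P.filter fun p => s ≤ p ∧ (p : ℝ≥0∞) < d
  have hsA : s ∈ A := Finset.mem_filter.mpr ⟨hs, le_rfl, hsd⟩
  have heA := Finset.mem_filter.mp (A.max'_mem ⟨s, hsA⟩)
  refine ⟨A.max' ⟨s, hsA⟩, heA.1, heA.2.1, fun p hp hsp => ⟨fun hpe => ?_, fun hpd => ?_⟩⟩
  · exact (ENNReal.coe_le_coe.mpr hpe).trans_lt heA.2.2
  · exact A.le_max' p (Finset.mem_filter.mpr ⟨hp, hsp, hpd⟩)

lemma map_homOfLE_trans_apply {J R : Type*} [Preorder J] [Ring R] (V : J ⥤ ModuleCat R)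
    {a b c : J} (hab : a ≤ b) (hbc : b ≤ c) (x : V.obj a) :
    V.map (homOfLE (hab.trans hbc)) x = V.map (homOfLE hbc) (V.map (homOfLE hab) x) := by
  rw [← ConcreteCategory.comp_apply, ← V.map_comp]
  rfl

section SubmoduleFunctor

open DirectSum

variable {C : Type*} [Category C] {R : Type*} [Ring R] (V : C ⥤ ModuleCat R)

def IsInvariantFamily (U : ∀ c, Submodule R (V.obj c)) : Prop :=
  ∀ ⦃c c' : C⦄ (f : c ⟶ c'), (U c).map (V.map f).hom ≤ U c'

noncomputable def submoduleFunctor (U : ∀ c, Submodule R (V.obj c)) (hU : IsInvariantFamily V U) :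
    C ⥤ ModuleCat R where
  obj c := ModuleCat.of R (U c)
  map f := ModuleCat.ofHom ((V.map f).hom.restrict fun x hx => hU f ⟨x, hx, rfl⟩)
  map_id c := by ext x; simp
  map_comp f g := by ext x; simp

def submoduleFunctorIncl {U : ∀ c, Submodule R (V.obj c)} {hU : IsInvariantFamily V U} :
    submoduleFunctor V U hU ⟶ V where
  app c := ModuleCat.ofHom (U c).subtype

variable {ι : Type} [Fintype ι] [DecidableEq ι] {U : ι → ∀ c, Submodule R (V.obj c)}
  {hU : ∀ i, IsInvariantFamily V (U i)} (hint : ∀ c, IsInternal fun i => U i c)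

noncomputable def submoduleFunctorProj (i : ι) : V ⟶ submoduleFunctor V (U i) (hU i) where
  app c := ModuleCat.ofHom ((hint c).proj i)
  naturality c c' f := by
    ext x
    exact Subtype.ext ((hint c).proj_map (hint c') (V.map f).hom (fun j => hU j f) i x)

noncomputable def isoBiproductOfIsInternal
    [HasBiproduct fun i => submoduleFunctor V (U i) (hU i)] :
    V ≅ ⨁ fun i => submoduleFunctor V (U i) (hU i) where
  hom := biproduct.lift (submoduleFunctorProj V hint)
  inv := biproduct.desc fun _ => submoduleFunctorIncl V
  hom_inv_id := by
    rw [biproduct.lift_desc]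
    ext c x
    simp only [NatTrans.app_sum, ModuleCat.hom_sum, LinearMap.sum_apply]
    exact (hint c).sum_proj x
  inv_hom_id := by
    refine biproduct.hom_ext' _ _ fun i => biproduct.hom_ext _ _ fun j => ?_
    rw [biproduct.ι_desc_assoc, Category.assoc, biproduct.lift_π, Category.comp_id,
      biproduct.ι_π]
    ext c x : 4
    by_cases hij : i = j
    · subst hij
      rw [dif_pos rfl, eqToHom_refl]
      exact (hint c).proj_of_mem x.2
    · simp only [hij, dite_false]
      exact (hint c).proj_of_mem_ne hij x.2

end SubmoduleFunctor

structure Bar (V : PMod) where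
  birth : ℝ≥0
  death : ℝ≥0∞
  gen : V.obj birth
  birth_lt_death : (birth : ℝ≥0∞) < death
  map_gen_eq_zero_iff : ∀ r (h : birth ≤ r), V.map (homOfLE h) gen = 0 ↔ death ≤ r

namespace Bar

variable {V : PMod} (b : Bar V)

noncomputable def val (r : ℝ≥0) : V.obj r :=
  if h : b.birth ≤ r then V.map (homOfLE h) b.gen else 0

lemma val_of_le {r : ℝ≥0} (h : b.birth ≤ r) : b.val r = V.map (homOfLE h) b.gen := dif_pos h

lemma val_of_lt {r : ℝ≥0} (h : r < b.birth) : b.val r = 0 := dif_neg h.not_ge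

lemma val_eq_zero_iff {r : ℝ≥0} : b.val r = 0 ↔ ¬(b.birth ≤ r ∧ (r : ℝ≥0∞) < b.death) := by
  by_cases h : b.birth ≤ r
  · simp [b.val_of_le h, b.map_gen_eq_zero_iff r h, h]
  · simp [b.val_of_lt (not_le.mp h), h]

lemma map_val {r r' : ℝ≥0} (h : b.birth ≤ r) (hr : r ≤ r') :
    V.map (homOfLE hr) (b.val r) = b.val r' := by
  rw [b.val_of_le h, b.val_of_le (h.trans hr)]
  exact (map_homOfLE_trans_apply V h hr b.gen).symm

lemma isInvariantFamily_span : IsInvariantFamily V fun r => ℚ ∙ b.val r := by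
  intro r r' f
  rw [Submodule.map_span, Set.image_singleton, Submodule.span_singleton_le_iff_mem]
  by_cases h : b.birth ≤ r
  · rw [show f = homOfLE (leOfHom f) from rfl, b.map_val h]
    exact Submodule.mem_span_singleton_self _
  · rw [b.val_of_lt (not_le.mp h), map_zero]
    exact zero_mem _


noncomputable def intervalModule : PMod :=
  submoduleFunctor V (fun r => ℚ ∙ b.val r) b.isInvariantFamily_span

lemma bijective_map_span_val {r r' : ℝ≥0} (hr : r ≤ r') (h : b.birth ≤ r)
    (h' : (r' : ℝ≥0∞) < b.death) :
    Function.Bijective ((V.map (homOfLE hr)).hom.restrict fun x hx =>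
      b.isInvariantFamily_span (homOfLE hr) ⟨x, hx, rfl⟩) := by
  have hval : b.val r' ≠ 0 := (b.val_eq_zero_iff).not.mpr (not_not.mpr ⟨h.trans hr, h'⟩)
  constructor
  · rintro ⟨y, hy⟩ ⟨z, hz⟩ hyz
    obtain ⟨c, rfl⟩ := Submodule.mem_span_singleton.mp hy
    obtain ⟨c', rfl⟩ := Submodule.mem_span_singleton.mp hz
    have := congrArg Subtype.val hyz
    simp only [LinearMap.restrict_apply, map_smul, b.map_val h] at this
    simp [smul_left_injective ℚ hval this]
  · rintro ⟨y, hy⟩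
    obtain ⟨c, rfl⟩ := Submodule.mem_span_singleton.mp hy
    refine ⟨⟨c • b.val r, Submodule.smul_mem _ _ (Submodule.mem_span_singleton_self _)⟩, ?_⟩
    ext
    simp [b.map_val h]

lemma isInterval_intervalModule : IsInterval b.intervalModule b.birth b.death := by
  refine ⟨fun r hs ht => ?_, fun r hr => ?_, fun r r' hr hs ht => ?_⟩
  · exact finrank_span_singleton ((b.val_eq_zero_iff).not.mpr
      (not_not.mpr ⟨ENNReal.coe_le_coe.mp hs, ht⟩))
  · have h0 : b.val r = 0 := b.val_eq_zero_iff.mpr (by rwa [ENNReal.coe_le_coe] at hr)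
    exact Submodule.subsingleton_iff_eq_bot.mpr (Submodule.span_singleton_eq_bot.mpr h0)
  · rw [ConcreteCategory.isIso_iff_bijective]
    exact b.bijective_map_span_val hr (ENNReal.coe_le_coe.mp hs) ht

end Bar

section KerInf

variable {V : PMod}

noncomputable def kerInf (U : ∀ r, Submodule ℚ (V.obj r)) {e : ℝ≥0}
    (φ : Module.Dual ℚ (V.obj e)) (r : ℝ≥0) : Submodule ℚ (V.obj r) :=
  if h : r ≤ e then U r ⊓ LinearMap.ker (φ ∘ₗ (V.map (homOfLE h)).hom) else U r

variable {U : ∀ r, Submodule ℚ (V.obj r)} {e : ℝ≥0} (φ : Module.Dual ℚ (V.obj e))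

lemma kerInf_of_le {r : ℝ≥0} (h : r ≤ e) :
    kerInf U φ r = U r ⊓ LinearMap.ker (φ ∘ₗ (V.map (homOfLE h)).hom) := dif_pos h

lemma kerInf_of_lt {r : ℝ≥0} (h : e < r) : kerInf U φ r = U r := dif_neg h.not_ge

lemma kerInf_le (r : ℝ≥0) : kerInf U φ r ≤ U r := by
  unfold kerInf
  split_ifs
  exacts [inf_le_left, le_rfl]

lemma isInvariantFamily_kerInf (hU : IsInvariantFamily V U) :
    IsInvariantFamily V (kerInf U φ) := by
  intro a b f
  by_cases hb : b ≤ e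
  · rw [kerInf_of_le φ ((leOfHom f).trans hb), kerInf_of_le φ hb]
    rintro _ ⟨y, ⟨hyU, hyk⟩, rfl⟩
    refine ⟨hU f ⟨y, hyU, rfl⟩, ?_⟩
    change φ (V.map (homOfLE hb) (V.map (homOfLE (leOfHom f)) y)) = 0
    rwa [← map_homOfLE_trans_apply]
  · rw [kerInf_of_lt φ (not_le.mp hb)]
    exact (Submodule.map_mono (kerInf_le φ a)).trans (hU f)

end KerInf

namespace Discretizes

variable {V : PMod} {ts : Finset ℝ≥0} (hV : Discretizes V ts)
include hV

lemma exists_floor (r : ℝ≥0) :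
    ∃ p ∈ insert 0 ts, ∃ h : p ≤ r, IsIso (V.map (homOfLE h)) ∧
      ∀ q ∈ insert 0 ts, q ≤ r → q ≤ p := by
  classical
  set A := (insert 0 ts).filter (· ≤ r)
  have hA : A.Nonempty := ⟨0, Finset.mem_filter.mpr ⟨Finset.mem_insert_self 0 ts, zero_le⟩⟩
  have hp := Finset.mem_filter.mp (A.max'_mem hA)
  have hmax : ∀ q ∈ insert 0 ts, q ≤ r → q ≤ A.max' hA :=
    fun q hq hqr => A.le_max' q (Finset.mem_filter.mpr ⟨hq, hqr⟩)
  refine ⟨A.max' hA, hp.1, hp.2, hV _ _ hp.2 ?_, hmax⟩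
  rintro ⟨c, hc, hpc, hcr⟩
  exact (hmax c (Finset.mem_insert_of_mem hc) hcr).not_gt hpc

lemma exists_death {s : ℝ≥0} (hs : s ∈ insert 0 ts) {x : V.obj s} (hx : x ≠ 0) :
    ∃ d : ℝ≥0∞, (s : ℝ≥0∞) < d ∧ ∀ r (h : s ≤ r), V.map (homOfLE h) x = 0 ↔ d ≤ r := by
  classical
  obtain ⟨d, hd⟩ := Finset.exists_ennreal_le_coe_iff
    ((insert 0 ts).filter fun q => ∃ h : s ≤ q, V.map (homOfLE h) x = 0)
  simp only [Finset.mem_filter] at hd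
  have hiff : ∀ r (h : s ≤ r), V.map (homOfLE h) x = 0 ↔ d ≤ r := by
    intro r hsr
    obtain ⟨p, hp, hpr, hiso, hmax⟩ := hV.exists_floor r
    have hsp := hmax s hs hsr
    rw [hd, map_homOfLE_trans_apply V hsp hpr,
      map_eq_zero_iff _ ((ConcreteCategory.isIso_iff_bijective _).mp hiso).1]
    refine ⟨fun h0 => ⟨p, ⟨hp, hsp, h0⟩, hpr⟩, ?_⟩
    rintro ⟨q, ⟨hq, hsq, h0⟩, hqr⟩
    rw [map_homOfLE_trans_apply V hsq (hmax q hq hqr), h0, map_zero]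
  refine ⟨d, lt_of_not_ge fun hds => ?_, hiff⟩
  rw [← hiff s le_rfl] at hds
  exact hx (by simpa using hds)

lemma exists_bar_split {U : ∀ r, Submodule ℚ (V.obj r)} (hU : IsInvariantFamily V U)
    {s : ℝ≥0} (hs : s ∈ insert 0 ts) (hbelow : ∀ q ∈ insert 0 ts, q < s → U q = ⊥)
    {x : V.obj s} (hxU : x ∈ U s) (hx : x ≠ 0) :
    ∃ (b : Bar V) (U' : ∀ r, Submodule ℚ (V.obj r)), b.birth = s ∧ IsInvariantFamily V U' ∧
      (∀ r, U' r ≤ U r) ∧ U' s < U s ∧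
      ∀ p ∈ insert 0 ts, Disjoint (ℚ ∙ b.val p) (U' p) ∧ ℚ ∙ b.val p ⊔ U' p = U p := by
  obtain ⟨d, hsd, hd⟩ := hV.exists_death hs hx
  let b : Bar V := ⟨s, d, x, hsd, hd⟩
  obtain ⟨e, he, hse, hlast⟩ := Finset.exists_last_lt hs hsd
  have hval : ∀ {p}, s ≤ p → p ≤ e → b.val p ≠ 0 := fun hsp hpe =>
    b.val_eq_zero_iff.not.mpr (not_not.mpr
      ⟨hsp, (ENNReal.coe_le_coe.mpr hpe).trans_lt ((hlast e he hse).mp le_rfl)⟩)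
  obtain ⟨φ, hφ⟩ := Module.Projective.exists_dual_ne_zero ℚ (hval hse le_rfl)
  have hψ : ∀ {p} (hsp : s ≤ p) (hpe : p ≤ e), φ (V.map (homOfLE hpe) (b.val p)) ≠ 0 :=
    fun hsp hpe => by rwa [b.map_val hsp]
  have hmem : ∀ {p} (hsp : s ≤ p), b.val p ∈ U p := fun hsp => by
    rw [b.val_of_le hsp]
    exact hU _ ⟨x, hxU, rfl⟩
  refine ⟨b, kerInf U φ, rfl, isInvariantFamily_kerInf φ hU, kerInf_le φ, ?_, fun p hp => ?_⟩
  · refine lt_of_le_of_ne (kerInf_le φ s) fun h => ?_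
    have hs' : b.val s ∈ kerInf U φ s := h ▸ hmem le_rfl
    rw [kerInf_of_le φ hse] at hs'
    exact hψ le_rfl hse hs'.2
  by_cases hsp : s ≤ p ∧ p ≤ e
  · rw [kerInf_of_le φ hsp.2]
    exact Submodule.disjoint_span_singleton_inf_ker_and_sup_eq (hmem hsp.1) (hψ hsp.1 hsp.2)
  have hzero : b.val p = 0 ∧ kerInf U φ p = U p := by
    rcases lt_or_ge p s with hps | hsp'
    · refine ⟨b.val_of_lt hps, le_antisymm (kerInf_le φ p) ?_⟩
      rw [hbelow p hp hps]
      exact bot_le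
    · have hep : e < p := lt_of_not_ge fun h => hsp ⟨hsp', h⟩
      exact ⟨b.val_eq_zero_iff.mpr fun h => hep.not_ge ((hlast p hp hsp').mpr h.2),
        kerInf_of_lt φ hep⟩
  rw [hzero.1, hzero.2, Submodule.span_singleton_eq_bot.mpr rfl]
  exact ⟨disjoint_bot_left, bot_sup_eq _⟩

theorem exists_bars (hF : FiniteType V) (U : ∀ r, Submodule ℚ (V.obj r))
    (hU : IsInvariantFamily V U) :
    ∃ (ι : Type) (_ : Fintype ι) (B : ι → Bar V), (∀ i, (B i).birth ∈ insert 0 ts) ∧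
      ∀ p ∈ insert 0 ts, iSupIndep (fun i => ℚ ∙ (B i).val p) ∧ ⨆ i, ℚ ∙ (B i).val p = U p := by
  induction hn : ∑ p ∈ insert 0 ts, Module.finrank ℚ (U p) using Nat.strong_induction_on
    generalizing U with
  | _ n ih =>
  by_cases hzero : ∀ p ∈ insert 0 ts, U p = ⊥
  · exact ⟨Empty, inferInstance, Empty.elim, fun i => i.elim,
      fun p hp => ⟨iSupIndep_subsingleton _, by simp [hzero p hp]⟩⟩
  push Not at hzero
  obtain ⟨s, hs, hUs, hbelow⟩ := Finset.exists_first hzero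
  obtain ⟨x, hxU, hx⟩ := Submodule.exists_mem_ne_zero_of_ne_bot hUs
  obtain ⟨b, U', rfl, hU', hle, hlt, hsplit⟩ :=
    hV.exists_bar_split hU hs (fun q hq hqs => not_not.mp (hbelow q hq hqs)) hxU hx
  have hdec : ∑ p ∈ insert 0 ts, Module.finrank ℚ (U' p) < n := by
    have : ∀ r, FiniteDimensional ℚ (V.obj r) := hF
    exact hn ▸ Finset.sum_lt_sum (fun p _ => Submodule.finrank_mono (hle p))
      ⟨b.birth, hs, Submodule.finrank_lt_finrank_of_lt hlt⟩
  obtain ⟨ι, _, B, hbirth, hB⟩ := ih _ hdec U' hU' rfl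
  refine ⟨Option ι, inferInstance, fun o => o.elim b B, ?_, fun p hp => ?_⟩
  · rintro (_ | i)
    exacts [hs, hbirth i]
  have hfam : (fun o : Option ι => ℚ ∙ (o.elim b B).val p) =
      fun o => o.elim (ℚ ∙ b.val p) fun i => ℚ ∙ (B i).val p := by
    funext o
    cases o <;> rfl
  rw [hfam, iSup_option_elim, (hB p hp).2]
  exact ⟨(hB p hp).1.option_elim ((hB p hp).2 ▸ (hsplit p hp).1), (hsplit p hp).2⟩

lemma isInternal_span_val {ι : Type} [DecidableEq ι] (B : ι → Bar V)
    (hbirth : ∀ i, (B i).birth ∈ insert 0 ts)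
    (hP : ∀ p ∈ insert 0 ts, DirectSum.IsInternal fun i => ℚ ∙ (B i).val p) (r : ℝ≥0) :
    DirectSum.IsInternal fun i => ℚ ∙ (B i).val r := by
  obtain ⟨p, hp, hpr, hiso, hmax⟩ := hV.exists_floor r
  have hval : ∀ i, V.map (homOfLE hpr) ((B i).val p) = (B i).val r := by
    intro i
    by_cases hb : (B i).birth ≤ p
    · exact (B i).map_val hb hpr
    · have hbr : r < (B i).birth := lt_of_not_ge fun h => hb (hmax _ (hbirth i) h)
      rw [(B i).val_of_lt (lt_of_not_ge hb), (B i).val_of_lt hbr, map_zero]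
  convert (hP p hp).map_linearEquiv (asIso (V.map (homOfLE hpr))).toLinearEquiv using 2 with i
  rw [Submodule.map_span, Set.image_singleton]
  exact congrArg _ (congrArg _ (hval i).symm)

theorem exists_isInternal_span_val (hF : FiniteType V) :
    ∃ (n : ℕ) (B : Fin n → Bar V), ∀ r, DirectSum.IsInternal fun i => ℚ ∙ (B i).val r := by
  obtain ⟨ι, _, B, hbirth, hB⟩ := hV.exists_bars hF (fun _ => ⊤) fun _ _ _ => le_top
  set e := Fintype.equivFin ι
  refine ⟨_, B ∘ e.symm, hV.isInternal_span_val _ (fun i => hbirth _) fun p hp => ?_⟩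
  rw [DirectSum.isInternal_submodule_iff_iSupIndep_and_iSup_eq_top]
  exact ⟨(hB p hp).1.comp e.symm.injective,
    (e.symm.iSup_comp (g := fun i => ℚ ∙ (B i).val p)).trans (hB p hp).2⟩

end Discretizes

/-- every tame persistence module of finite type decomposes as a finite
direct sum of half-open interval modules `I_{[s_i, t_i)}` (with `t_i` possibly `∞`). -/
theorem stmt3 (V : PMod) (hT : Tame V) (hF : FiniteType V) :
    ∃ (n : ℕ) (sIdx : Fin n → ℝ≥0) (tIdx : Fin n → ℝ≥0∞) (I : Fin n → PMod),
      (∀ i, (sIdx i : ℝ≥0∞) < tIdx i) ∧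
      (∀ i, IsInterval (I i) (sIdx i : ℝ≥0∞) (tIdx i)) ∧
      Nonempty (V ≅ ⨁ I) := by
  obtain ⟨ts, hV⟩ := hT
  obtain ⟨n, B, hB⟩ := hV.exists_isInternal_span_val hF
  exact ⟨n, fun i => (B i).birth, fun i => (B i).death, fun i => (B i).intervalModule,
    fun i => (B i).birth_lt_death, fun i => (B i).isInterval_intervalModule,
    ⟨isoBiproductOfIsInternal V hB⟩⟩
end

section
/- Let V be a persistence module containing a right-closed point, i.e., a nonzero element v ∈ V(r) such that V(r ≤ r+ε)(v) = 0 for all ε > 0. Then v admits no compact neighbourhood: there is no submodule U ⊆ V containing v such that U is tame and of finite type (equivalently, a finite direct sum of half-open interval modules). In particular V is not locally compact. -/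
open CategoryTheory CategoryTheory.Limits NNReal
open scoped ENNReal

/-- A sub-persistence-module: a family of `ℚ`-subspaces preserved by the structure maps. -/
structure Subpersistence (V : PMod) where
  U : ∀ r : ℝ≥0, Submodule ℚ (V.obj r)
  maps_mem : ∀ a b : ℝ≥0, ∀ h : a ≤ b, ∀ x ∈ U a, (V.map (homOfLE h)) x ∈ U b

/-- Tameness of a sub-persistence-module: away from finitely many thresholds, the
structure maps restrict to bijections between the subspaces. -/
def SubTame {V : PMod} (W : Subpersistence V) : Prop :=
  ∃ ts : Finset ℝ≥0, ∀ a b : ℝ≥0, ∀ h : a ≤ b, (¬ ∃ c ∈ ts, a < c ∧ c ≤ b) →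
    Set.BijOn (V.map (homOfLE h)) (W.U a : Set (V.obj a)) (W.U b : Set (V.obj b))

/-- Finite type for a sub-persistence-module: each subspace is finite dimensional. -/
def SubFiniteType {V : PMod} (W : Subpersistence V) : Prop :=
  ∀ r : ℝ≥0, FiniteDimensional ℚ ↥(W.U r)

/-- A compact (= tame and finite type, equivalently finitely interval-decomposable)
sub-persistence-module. -/
def IsCompactSub {V : PMod} (W : Subpersistence V) : Prop :=
  SubTame W ∧ SubFiniteType W

/-- `V` is locally compact if every element admits a compact neighbourhood. -/
def LocallyCompact (V : PMod) : Prop :=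
  ∀ (r : ℝ≥0) (v : V.obj r), ∃ W : Subpersistence V, v ∈ W.U r ∧ IsCompactSub W

/-! A tame submodule has only finitely many thresholds, so some interval `(r, r + ε]` avoids them
all; on it the structure map of the submodule is injective, which rules out a nonzero element of
`W(r)` being killed by `V(r ≤ r + ε)`. -/

theorem Finset.exists_gt_forall_notMem_Ioc {α : Type*} [LinearOrder α] [DenselyOrdered α]
    [NoMaxOrder α] (s : Finset α) (a : α) : ∃ b, a < b ∧ ∀ c ∈ s, c ∉ Set.Ioc a b := by
  classical
  induction s using Finset.induction_on with
  | empty => simpa using exists_gt a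
  | insert c s _ ih =>
    obtain ⟨b, hab, hb⟩ := ih
    by_cases hac : a < c
    · obtain ⟨b', hab', hb'⟩ := _root_.exists_between (lt_min hab hac)
      refine ⟨b', hab', fun d hd hdI => ?_⟩
      rcases Finset.mem_insert.1 hd with rfl | hds
      · exact (hb'.trans_le (min_le_right _ _)).not_ge hdI.2
      · exact hb d hds ⟨hdI.1, hdI.2.trans (hb'.le.trans (min_le_left _ _))⟩
    · refine ⟨b, hab, fun d hd hdI => ?_⟩
      rcases Finset.mem_insert.1 hd with rfl | hds
      · exact hac hdI.1
      · exact hb d hds hdI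

theorem SubTame.eq_zero_of_forall_map_eq_zero {V : PMod} {W : Subpersistence V} (hW : SubTame W)
    {r : ℝ≥0} {v : V.obj r} (hvW : v ∈ W.U r)
    (hrc : ∀ ε : ℝ≥0, 0 < ε → (V.map (homOfLE (le_self_add : r ≤ r + ε))) v = 0) : v = 0 := by
  obtain ⟨ts, hts⟩ := hW
  obtain ⟨b, hrb, hb⟩ := ts.exists_gt_forall_notMem_Ioc r
  obtain ⟨ε, hε, rfl⟩ : ∃ ε : ℝ≥0, 0 < ε ∧ b = r + ε :=
    ⟨b - r, tsub_pos_of_lt hrb, (add_tsub_cancel_of_le hrb.le).symm⟩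
  have hinj := (hts r (r + ε) le_self_add fun ⟨c, hc, hrc₀, hcb⟩ => hb c hc ⟨hrc₀, hcb⟩).injOn
  exact hinj hvW (W.U r).zero_mem (by rw [hrc ε hε, map_zero])

/-- if `v ∈ V(r)` is a nonzero right-closed point (killed by every forward
structure map `V(r ≤ r+ε)`, `ε > 0`), then `v` admits no compact neighbourhood: no
tame, finite-type submodule of `V` contains `v`.  In particular `V` is not locally
compact. -/
theorem stmt6 (V : PMod) (r : ℝ≥0) (v : V.obj r) (hv : v ≠ 0)
    (hrc : ∀ ε : ℝ≥0, 0 < ε → (V.map (homOfLE (le_self_add : r ≤ r + ε))) v = 0) :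
    (¬ ∃ W : Subpersistence V, v ∈ W.U r ∧ IsCompactSub W) ∧ ¬ LocallyCompact V := by
  have no_nbhd : ¬ ∃ W : Subpersistence V, v ∈ W.U r ∧ IsCompactSub W :=
    fun ⟨_, hvW, hW, _⟩ => hv (hW.eq_zero_of_forall_map_eq_zero hvW hrc)
  exact ⟨no_nbhd, fun hV => no_nbhd (hV r v)⟩
end

section
/- An arbitrary direct sum of locally compact persistence modules is locally compact. -/
open CategoryTheory CategoryTheory.Limits NNReal
open scoped ENNReal

/-!
An element `v` of `∐ V` at level `r` is a finite sum `∑ i ∈ s, ιᵢ yᵢ`. Choosing a compact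
neighbourhood `Kᵢ` of each `yᵢ`, the finite direct sum `⨁ i ∈ s, Kᵢ` embeds into `∐ V` and
contains `v`. It is of finite type because each `Kᵢ` is, and it is tame with the union of the
finitely many threshold sets of the `Kᵢ`: away from them every structure map of every `Kᵢ`,
hence of the sum, is bijective.
-/

lemma Set.bijOn_range_of_comp_eq {α β γ δ : Type*} {f : γ → δ} {Φ : α → γ} {Ψ : β → δ}
    {g : α → β} (hcomm : f ∘ Φ = Ψ ∘ g) (hg : Function.Bijective g)
    (hΨ : Function.Injective Ψ) : Set.BijOn f (Set.range Φ) (Set.range Ψ) := by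
  have hcomm' : ∀ x, f (Φ x) = Ψ (g x) := congrFun hcomm
  refine ⟨?_, ?_, ?_⟩
  · rintro _ ⟨x, rfl⟩
    exact ⟨g x, (hcomm' x).symm⟩
  · rintro _ ⟨x, rfl⟩ _ ⟨x', rfl⟩ hxx'
    rw [hcomm', hcomm'] at hxx'
    rw [hg.injective (hΨ hxx')]
  · rintro _ ⟨y, rfl⟩
    obtain ⟨x, rfl⟩ := hg.surjective y
    exact ⟨Φ x, ⟨x, rfl⟩, hcomm' x⟩

noncomputable section

variable {ι : Type} (V : ι → PMod)

def sigmaProj (i : ι) : ∐ V ⟶ V i := by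
  classical
  exact Sigma.desc fun j => if h : j = i then eqToHom (congrArg V h) else 0

lemma sigmaProj_app_ι_app_self (i : ι) (t : ℝ≥0) (x : (V i).obj t) :
    (sigmaProj V i).app t ((Sigma.ι V i).app t x) = x := by
  have h : Sigma.ι V i ≫ sigmaProj V i = 𝟙 (V i) := by simp [sigmaProj]
  simpa using ConcreteCategory.congr_hom (NatTrans.congr_app h t) x

lemma sigmaProj_app_ι_app_of_ne {i j : ι} (hne : j ≠ i) (t : ℝ≥0) (x : (V j).obj t) :
    (sigmaProj V i).app t ((Sigma.ι V j).app t x) = 0 := by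
  have h : Sigma.ι V j ≫ sigmaProj V i = 0 := by simp [sigmaProj, hne]
  simpa using ConcreteCategory.congr_hom (NatTrans.congr_app h t) x

/-- Evaluation at `t` preserves the coproduct, and the quotient map by the span of the summands
kills every summand. -/
lemma iSup_range_sigma_ι_app_eq_top (t : ℝ≥0) :
    ⨆ i, LinearMap.range ((Sigma.ι V i).app t).hom = ⊤ := by
  set S := ⨆ i, LinearMap.range ((Sigma.ι V i).app t).hom
  have hc := isColimitOfPreserves ((evaluation ℝ≥0 (ModuleCat ℚ)).obj t)
    (colimit.isColimit (Discrete.functor V))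
  have hmkQ : (ModuleCat.ofHom S.mkQ : (∐ V).obj t ⟶ ModuleCat.of ℚ (_ ⧸ S)) = 0 := by
    refine hc.hom_ext fun ⟨i⟩ => ?_
    ext x
    exact (Submodule.Quotient.mk_eq_zero S).2
      (le_iSup (fun i => LinearMap.range ((Sigma.ι V i).app t).hom) i ⟨x, rfl⟩)
  have : S.mkQ = 0 := congrArg ModuleCat.Hom.hom hmkQ
  rw [← Submodule.ker_mkQ S, this, LinearMap.ker_zero]

lemma exists_eq_sum_sigma_ι_app (t : ℝ≥0) (x : (∐ V).obj t) :
    ∃ (s : Finset ι) (y : ∀ i, (V i).obj t), x = ∑ i ∈ s, (Sigma.ι V i).app t (y i) := by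
  have hx : x ∈ ⨆ i, LinearMap.range ((Sigma.ι V i).app t).hom := by
    rw [iSup_range_sigma_ι_app_eq_top]
    trivial
  obtain ⟨g, hg, rfl⟩ := (Submodule.mem_iSup_iff_exists_finsupp _ _).1 hx
  choose y hy using hg
  exact ⟨g.support, y, Finset.sum_congr rfl fun i _ => (hy i).symm⟩

namespace Subpersistence

def restrictMap {W : PMod} (L : Subpersistence W) {a b : ℝ≥0} (h : a ≤ b)
    (x : L.U a) : L.U b :=
  ⟨W.map (homOfLE h) x, L.maps_mem a b h x x.2⟩

variable {V} (s : Finset ι) (K : ∀ i : s, Subpersistence (V i))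

def sumEmbedding (t : ℝ≥0) : (∀ i : s, (K i).U t) →ₗ[ℚ] (∐ V).obj t :=
  ∑ i : s, ((Sigma.ι V i).app t).hom ∘ₗ ((K i).U t).subtype ∘ₗ LinearMap.proj i

lemma sumEmbedding_apply (t : ℝ≥0) (x : ∀ i : s, (K i).U t) :
    sumEmbedding s K t x = ∑ i : s, (Sigma.ι V i).app t (x i) := by
  simp [sumEmbedding]

lemma sigmaProj_app_sumEmbedding (t : ℝ≥0) (x : ∀ i : s, (K i).U t) (j : s) :
    (sigmaProj V j).app t (sumEmbedding s K t x) = x j := by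
  rw [sumEmbedding_apply, map_sum, Finset.sum_eq_single j]
  · exact sigmaProj_app_ι_app_self V j t _
  · exact fun i _ hij => sigmaProj_app_ι_app_of_ne V (Subtype.coe_ne_coe.2 hij) t _
  · exact fun hj => absurd (Finset.mem_univ j) hj

lemma sumEmbedding_injective (t : ℝ≥0) : Function.Injective (sumEmbedding s K t) :=
  fun x y hxy => funext fun j => Subtype.ext <| by
    rw [← sigmaProj_app_sumEmbedding s K t x j, hxy, sigmaProj_app_sumEmbedding]

lemma map_sumEmbedding {a b : ℝ≥0} (h : a ≤ b) :
    (∐ V).map (homOfLE h) ∘ sumEmbedding s K a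
      = sumEmbedding s K b ∘ Pi.map fun i => (K i).restrictMap h := by
  funext x
  simp only [Function.comp_apply, sumEmbedding_apply, map_sum, Pi.map_apply,
    restrictMap]
  exact Finset.sum_congr rfl fun i _ =>
    (NatTrans.naturality_apply (Sigma.ι V i) (homOfLE h) (x i).1).symm

def finsetSum : Subpersistence (∐ V) where
  U t := LinearMap.range (sumEmbedding s K t)
  maps_mem a b h := by
    rintro _ ⟨x, rfl⟩
    exact ⟨_, (congrFun (map_sumEmbedding s K h) x).symm⟩

lemma subTame_finsetSum (hK : ∀ i, SubTame (K i)) : SubTame (finsetSum s K) := by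
  choose ts hts using hK
  refine ⟨Finset.univ.biUnion ts, fun a b h hnone => ?_⟩
  have hbij : ∀ i, Function.Bijective ((K i).restrictMap h) := fun i =>
    (hts i a b h fun ⟨c, hc, hac, hcb⟩ =>
      hnone ⟨c, Finset.mem_biUnion.2 ⟨i, Finset.mem_univ i, hc⟩, hac, hcb⟩).bijective
  simp only [finsetSum, LinearMap.coe_range]
  exact Set.bijOn_range_of_comp_eq (map_sumEmbedding s K h) (Function.Bijective.piMap hbij)
    (sumEmbedding_injective s K b)

lemma subFiniteType_finsetSum (hK : ∀ i, SubFiniteType (K i)) :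
    SubFiniteType (finsetSum s K) := fun t =>
  have := fun i => hK i t
  LinearMap.finiteDimensional_range (sumEmbedding s K t)

lemma isCompactSub_finsetSum (hK : ∀ i, IsCompactSub (K i)) : IsCompactSub (finsetSum s K) :=
  ⟨subTame_finsetSum s K fun i => (hK i).1, subFiniteType_finsetSum s K fun i => (hK i).2⟩

end Subpersistence

end

/-- an arbitrary direct sum (coproduct, computed pointwise) of locally
compact persistence modules is locally compact. -/
theorem stmt8 (ι : Type) (V : ι → PMod) (h : ∀ i, LocallyCompact (V i)) :
    LocallyCompact (∐ V) := by
  intro r v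
  obtain ⟨s, y, rfl⟩ := exists_eq_sum_sigma_ι_app V r v
  choose K hyK hK using fun i : s => h i r (y i)
  refine ⟨Subpersistence.finsetSum s K, ⟨fun i => ⟨y i, hyK i⟩, ?_⟩,
    Subpersistence.isCompactSub_finsetSum s K hK⟩
  rw [Subpersistence.sumEmbedding_apply]
  exact Finset.sum_coe_sort s fun i => (Sigma.ι V i).app r (y i)
end

section
/- Every morphism of persistent cochain complexes having the right lifting property with respect to the generating set I = {S_{[s,t)}^k ↪ D_s^k : k ∈ ℕ, 0 ≤ s < t ≤ ∞} also has the right lifting property with respect to J = {D_t^k → D_s^k : 0 ≤ s < t < ∞} ∪ {0 → D_s^k : s ≥ 0}. -/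
open CategoryTheory CategoryTheory.Limits NNReal
open scoped ENNReal

/-- Non-negatively graded cochain complexes of `ℚ`-vector spaces. -/
abbrev CC := CochainComplex (ModuleCat ℚ) ℕ

/-- Persistent cochain complexes. -/
abbrev PCC := ℝ≥0 ⥤ CC

/-- The sphere complex `S^k`: one copy of `ℚ` in degree `k`, zero elsewhere
(characterized up to isomorphism). -/
def IsSphereC (C : CC) (k : ℕ) : Prop :=
  Module.finrank ℚ (C.X k) = 1 ∧ ∀ n, n ≠ k → Subsingleton (C.X n)

/-- The disk complex `D^k`: copies of `ℚ` in degrees `k-1` and `k` with the identity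
differential (characterized up to isomorphism); by convention `D^0 = 0`. -/
def IsDiskC (C : CC) (k : ℕ) : Prop :=
  if k = 0 then ∀ n, Subsingleton (C.X n)
  else Module.finrank ℚ (C.X k) = 1 ∧ Module.finrank ℚ (C.X (k-1)) = 1 ∧
    (∀ n, n ≠ k → n ≠ k - 1 → Subsingleton (C.X n)) ∧
    Function.Bijective (C.d (k-1) k)

/-- The persistent disk `D_s^k`: constant with value `D^k` on `[s,∞)`, zero before `s`. -/
def IsPDisk (D : PCC) (s : ℝ≥0) (k : ℕ) : Prop :=
  (∀ r : ℝ≥0, r < s → ∀ n, Subsingleton ((D.obj r).X n)) ∧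
  (∀ r : ℝ≥0, s ≤ r → IsDiskC (D.obj r) k) ∧
  (∀ a b : ℝ≥0, ∀ h : a ≤ b, s ≤ a → IsIso (D.map (homOfLE h)))

/-- The interval sphere `S_{[s,t)}^k`: zero before `s`, the sphere `S^k` on `[s,t)`, the
disk `D^k` on `[t,∞)` (`t` may be `∞`), with structure maps isomorphisms within each of
the two regions. -/
def IsPSphere (S : PCC) (s : ℝ≥0) (t : ℝ≥0∞) (k : ℕ) : Prop :=
  (∀ r : ℝ≥0, r < s → ∀ n, Subsingleton ((S.obj r).X n)) ∧
  (∀ r : ℝ≥0, s ≤ r → (r : ℝ≥0∞) < t → IsSphereC (S.obj r) k) ∧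
  (∀ r : ℝ≥0, t ≤ (r : ℝ≥0∞) → IsDiskC (S.obj r) k) ∧
  (∀ a b : ℝ≥0, ∀ h : a ≤ b, s ≤ a → ((b : ℝ≥0∞) < t ∨ t ≤ (a : ℝ≥0∞)) →
    IsIso (S.map (homOfLE h)))

/-- The canonical inclusion `S_{[s,t)}^k ↪ D_s^k`: in the sphere region it is injective
in degree `k` (identifying `S^k` with the cocycles of `D^k`), and from time `t` on it is
an isomorphism. -/
def IsSphereDiskIncl (S D : PCC) (s : ℝ≥0) (t : ℝ≥0∞) (k : ℕ) (i : S ⟶ D) : Prop :=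
  IsPSphere S s t k ∧ IsPDisk D s k ∧
  (k ≠ 0 → ∀ r : ℝ≥0, s ≤ r → (r : ℝ≥0∞) < t → Function.Injective ((i.app r).f k)) ∧
  (∀ r : ℝ≥0, t ≤ (r : ℝ≥0∞) → IsIso (i.app r))

/-- The canonical inclusion `D_t^k ↪ D_s^k` for `s ≤ t`: an isomorphism from time `t`
on. -/
def IsDiskIncl (Dt Ds : PCC) (s t : ℝ≥0) (k : ℕ) (i : Dt ⟶ Ds) : Prop :=
  s ≤ t ∧ IsPDisk Dt t k ∧ IsPDisk Ds s k ∧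
  (∀ r : ℝ≥0, t ≤ r → IsIso (i.app r))

/-- The zero persistent cochain complex, characterized up to isomorphism. -/
def IsZeroP (Z : PCC) : Prop := ∀ (r : ℝ≥0) (n : ℕ), Subsingleton ((Z.obj r).X n)

/-!
Let `j : V ⟶ D` be a map of `J`, with `D = D_s^k` and `V` either `D_t^k` or `0`: in both cases
`V` is a disk born at some time `T > s` (`T = ∞` for `0`), and `j` is an isomorphism from `T`
on. Write `W^n` for the degree `n` part of a persistent complex `W`. For `k = 0` all complexes
involved vanish. For `k = q + 1` a square `(u, v)` from `j` to `f` is solved by two liftings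
against members of `I` built from `j`:

* `j^{q+1} : V^{q+1} → D^{q+1}`, placed in degrees `q + 1, q + 2`, is an interval sphere
  `S_{[s,T)}^{q+2}` inside the disk `𝟙 : D^{q+1} → D^{q+1}` in the same degrees; lifting against
  it extends `u^{q+1}` along `j^{q+1}` to a cocycle `ξ : D^{q+1} → X^{q+1}` lifting `v^{q+1}`;
* `j^{q+1} ∘ d : V^q → D^{q+1}`, placed in degrees `q, q + 1`, is `S_{[s,T)}^{q+1}` inside `D`
  itself; `u^q` and `ξ` map it to `X`, and lifting against it gives the required lift `D → X`.
-/

namespace HomologicalComplex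

variable {J C ι : Type*} [Category* J] [Category* C] {c : ComplexShape ι}

section FunctorX

variable [HasZeroMorphisms C]

/-- The degree `i` part of a functor to complexes: the same as `W ⋙ eval C c i`, but with
objects reducibly equal to `(W.obj t).X i`, which keeps `simp` working on composites. -/
abbrev functorX (W : J ⥤ HomologicalComplex C c) (i : ι) : J ⥤ C where
  obj t := (W.obj t).X i
  map g := (W.map g).f i

abbrev functorXMap {W W' : J ⥤ HomologicalComplex C c} (α : W ⟶ W') (i : ι) :
    functorX W i ⟶ functorX W' i where
  app t := (α.app t).f i
  naturality _ _ g := congr_hom (α.naturality g) i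

abbrev functorD (W : J ⥤ HomologicalComplex C c) (i i' : ι) : functorX W i ⟶ functorX W i' where
  app t := (W.obj t).d i i'
  naturality _ _ g := (W.map g).comm i i'

abbrev functorDMap {W W' : J ⥤ HomologicalComplex C c} (α : W ⟶ W') (i i' : ι) :
    functorX W i ⟶ functorX W' i' where
  app t := (W.obj t).d i i' ≫ (α.app t).f i'
  naturality _ _ g := by
    dsimp
    rw [Hom.comm_assoc, ← comp_f, α.naturality g, comp_f, Category.assoc]

end FunctorX

section DoubleFunctor

variable [HasZeroMorphisms C] [HasZeroObject C] {i₀ i₁ : ι} (hi₀₁ : c.Rel i₀ i₁) (h : i₀ ≠ i₁)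
  {A B : J ⥤ C} (δ : A ⟶ B)

lemma isIso_of_isIso_f_of_isZero {K L : HomologicalComplex C c} (φ : K ⟶ L)
    [IsIso (φ.f i₀)] [IsIso (φ.f i₁)] (hK : ∀ k, k ≠ i₀ → k ≠ i₁ → IsZero (K.X k))
    (hL : ∀ k, k ≠ i₀ → k ≠ i₁ → IsZero (L.X k)) : IsIso φ := by
  have (k : ι) : IsIso (φ.f k) := by
    by_cases hk₀ : k = i₀
    · subst hk₀; infer_instance
    by_cases hk₁ : k = i₁
    · subst hk₁; infer_instance
    exact isIso_of_source_target_iso_zero _ (hK k hk₀ hk₁).isoZero (hL k hk₀ hk₁).isoZero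
  exact Hom.isIso_of_components φ

noncomputable abbrev doubleFunctor : J ⥤ HomologicalComplex C c where
  obj t := double (δ.app t) hi₀₁
  map g := mkHomFromDouble hi₀₁ h (A.map g ≫ (doubleXIso₀ _ hi₀₁).inv)
    (B.map g ≫ (doubleXIso₁ _ hi₀₁ h).inv) (by simp [double_d _ hi₀₁ h])
    (fun _ _ => by rw [double_d_eq_zero₀ _ _ _ _ h.symm, comp_zero])
  map_id t := by ext <;> simp
  map_comp g g' := by ext <;> simp

@[simps!]
noncomputable def doubleFunctorXIso₀ : functorX (doubleFunctor hi₀₁ h δ) i₀ ≅ A :=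
  NatIso.ofComponents (fun t => doubleXIso₀ (δ.app t) hi₀₁) (fun _ => by simp)

@[simps!]
noncomputable def doubleFunctorXIso₁ : functorX (doubleFunctor hi₀₁ h δ) i₁ ≅ B :=
  NatIso.ofComponents (fun t => doubleXIso₁ (δ.app t) hi₀₁ h) (fun _ => by simp)

instance isIso_doubleFunctor_map {t t' : J} (g : t ⟶ t') [IsIso (A.map g)] [IsIso (B.map g)] :
    IsIso ((doubleFunctor hi₀₁ h δ).map g) := by
  have : IsIso (((doubleFunctor hi₀₁ h δ).map g).f i₀) := by
    dsimp; rw [mkHomFromDouble_f₀]; infer_instance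
  have : IsIso (((doubleFunctor hi₀₁ h δ).map g).f i₁) := by
    dsimp; rw [mkHomFromDouble_f₁]; infer_instance
  exact isIso_of_isIso_f_of_isZero _ (isZero_double_X _ hi₀₁) (isZero_double_X _ hi₀₁)

variable {hi₀₁ h δ} in
lemma doubleFunctor_hom_ext {W : J ⥤ HomologicalComplex C c}
    {φ φ' : doubleFunctor hi₀₁ h δ ⟶ W} (h₀ : ∀ t, (φ.app t).f i₀ = (φ'.app t).f i₀)
    (h₁ : ∀ t, (φ.app t).f i₁ = (φ'.app t).f i₁) : φ = φ' := by
  ext t : 2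
  exact from_double_hom_ext (f := δ.app t) (hi₀₁ := hi₀₁) (h₀ t) (h₁ t)

variable {δ} {W : J ⥤ HomologicalComplex C c} (φ₀ : A ⟶ functorX W i₀)
  (φ₁ : B ⟶ functorX W i₁) (comm : ∀ t, φ₀.app t ≫ (W.obj t).d i₀ i₁ = δ.app t ≫ φ₁.app t)
  (hφ : ∀ t k, c.Rel i₁ k → φ₁.app t ≫ (W.obj t).d i₁ k = 0)

noncomputable def mkHomFromDoubleFunctor : doubleFunctor hi₀₁ h δ ⟶ W where
  app t := mkHomFromDouble hi₀₁ h (φ₀.app t) (φ₁.app t) (comm t) (hφ t)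
  naturality t t' g := by
    refine from_double_hom_ext (f := δ.app t) (hi₀₁ := hi₀₁) ?_ ?_ <;> simp

@[simp]
lemma mkHomFromDoubleFunctor_app_f₀ (t : J) :
    ((mkHomFromDoubleFunctor hi₀₁ h φ₀ φ₁ comm hφ).app t).f i₀ =
      (doubleXIso₀ _ hi₀₁).hom ≫ φ₀.app t :=
  mkHomFromDouble_f₀ hi₀₁ h _ _ (comm t) (hφ t)

@[simp]
lemma mkHomFromDoubleFunctor_app_f₁ (t : J) :
    ((mkHomFromDoubleFunctor hi₀₁ h φ₀ φ₁ comm hφ).app t).f i₁ =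
      (doubleXIso₁ _ hi₀₁ h).hom ≫ φ₁.app t :=
  mkHomFromDouble_f₁ hi₀₁ h _ _ (comm t) (hφ t)

end DoubleFunctor

end HomologicalComplex

open HomologicalComplex

lemma isDiskC_succ_iff {C : CC} {q : ℕ} :
    IsDiskC C (q + 1) ↔ Module.finrank ℚ (C.X (q + 1)) = 1 ∧ Module.finrank ℚ (C.X q) = 1 ∧
      (∀ n, n ≠ q + 1 → n ≠ q → Subsingleton (C.X n)) ∧ Function.Bijective (C.d q (q + 1)) := by
  simp [IsDiskC]

lemma isDiskC_zero_iff {C : CC} : IsDiskC C 0 ↔ ∀ n, Subsingleton (C.X n) := by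
  simp [IsDiskC]

/-- `ℚ` on `[s, ∞)` and `0` before `s`, up to isomorphism; `s = ⊤` gives the zero module. -/
structure IsIntervalModule (A : ℝ≥0 ⥤ ModuleCat ℚ) (s : ℝ≥0∞) : Prop where
  subsingleton : ∀ r : ℝ≥0, (r : ℝ≥0∞) < s → Subsingleton (A.obj r)
  finrank_eq_one : ∀ r : ℝ≥0, s ≤ r → Module.finrank ℚ (A.obj r) = 1
  isIso_map : ∀ (a b : ℝ≥0) (h : a ≤ b), s ≤ a → IsIso (A.map (homOfLE h))

/-- `IsPDisk` with the birth time allowed to be `⊤`, where it describes the zero complex. -/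
def IsPDiskFrom (D : PCC) (T : ℝ≥0∞) (k : ℕ) : Prop :=
  (∀ r : ℝ≥0, (r : ℝ≥0∞) < T → ∀ n, Subsingleton ((D.obj r).X n)) ∧
  (∀ r : ℝ≥0, T ≤ (r : ℝ≥0∞) → IsDiskC (D.obj r) k) ∧
  (∀ a b : ℝ≥0, ∀ h : a ≤ b, T ≤ (a : ℝ≥0∞) → IsIso (D.map (homOfLE h)))

lemma isPDiskFrom_coe_iff {D : PCC} {s : ℝ≥0} {k : ℕ} :
    IsPDiskFrom D s k ↔ IsPDisk D s k := by
  simp only [IsPDiskFrom, IsPDisk, ENNReal.coe_lt_coe, ENNReal.coe_le_coe]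

lemma IsZeroP.isPDiskFrom_top {Z : PCC} (hZ : IsZeroP Z) (k : ℕ) : IsPDiskFrom Z ⊤ k :=
  ⟨fun r _ => hZ r, fun r hr => absurd hr (by simp), fun a _ _ ha => absurd ha (by simp)⟩

namespace IsPDiskFrom

variable {D : PCC} {T : ℝ≥0∞} {q : ℕ} (hD : IsPDiskFrom D T (q + 1))
include hD

lemma isZero_X (r : ℝ≥0) {n : ℕ} (hn : n ≠ q) (hn' : n ≠ q + 1) : IsZero ((D.obj r).X n) := by
  have : Subsingleton ((D.obj r).X n) := by
    rcases lt_or_ge (r : ℝ≥0∞) T with hr | hr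
    · exact hD.1 r hr n
    · exact (isDiskC_succ_iff.1 (hD.2.1 r hr)).2.2.1 n hn' hn
  exact ModuleCat.isZero_of_subsingleton _

lemma d_succ_eq_zero (r : ℝ≥0) : (D.obj r).d (q + 1) (q + 1 + 1) = 0 :=
  (hD.isZero_X r (by omega) (by omega)).eq_of_tgt _ _

lemma isIntervalModule_X_succ : IsIntervalModule (functorX D (q + 1)) T where
  subsingleton r hr := hD.1 r hr _
  finrank_eq_one r hr := (isDiskC_succ_iff.1 (hD.2.1 r hr)).1
  isIso_map a b h ha := have := hD.2.2 a b h ha; inferInstanceAs (IsIso ((D.map _).f _))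

lemma isIntervalModule_X : IsIntervalModule (functorX D q) T where
  subsingleton r hr := hD.1 r hr _
  finrank_eq_one r hr := (isDiskC_succ_iff.1 (hD.2.1 r hr)).2.1
  isIso_map a b h ha := have := hD.2.2 a b h ha; inferInstanceAs (IsIso ((D.map _).f _))

lemma bijective_d {r : ℝ≥0} (hr : T ≤ r) : Function.Bijective ((D.obj r).d q (q + 1)) :=
  (isDiskC_succ_iff.1 (hD.2.1 r hr)).2.2.2

end IsPDiskFrom

section Double

variable {M N : ModuleCat ℚ} (φ : M ⟶ N) (m : ℕ)

lemma subsingleton_double_X {n : ℕ} (hn : n ≠ m) (hn' : n ≠ m + 1) :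
    Subsingleton ((double φ (ComplexShape.up_mk m (m + 1) rfl)).X n) :=
  ModuleCat.subsingleton_of_isZero (isZero_double_X _ _ _ hn hn')

lemma subsingleton_double_X_of_subsingleton [Subsingleton M] [Subsingleton N] (n : ℕ) :
    Subsingleton ((double φ (ComplexShape.up_mk m (m + 1) rfl)).X n) := by
  by_cases hn : n = m
  · subst hn; exact (doubleXIso₀ φ _).toLinearEquiv.toEquiv.subsingleton
  by_cases hn' : n = m + 1
  · subst hn'; exact (doubleXIso₁ φ _ (by omega)).toLinearEquiv.toEquiv.subsingleton
  exact subsingleton_double_X φ m hn hn'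

lemma isSphereC_double [Subsingleton M] (hN : Module.finrank ℚ N = 1) :
    IsSphereC (double φ (ComplexShape.up_mk m (m + 1) rfl)) (m + 1) := by
  refine ⟨(doubleXIso₁ φ _ (by omega)).toLinearEquiv.finrank_eq.trans hN, fun n hn => ?_⟩
  by_cases hn' : n = m
  · subst hn'; exact (doubleXIso₀ φ _).toLinearEquiv.toEquiv.subsingleton
  exact subsingleton_double_X φ m hn' hn

lemma isDiskC_double (hM : Module.finrank ℚ M = 1) (hN : Module.finrank ℚ N = 1)
    (hφ : Function.Bijective φ) :
    IsDiskC (double φ (ComplexShape.up_mk m (m + 1) rfl)) (m + 1) := by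
  have : IsIso φ := (ConcreteCategory.isIso_iff_bijective φ).2 hφ
  refine isDiskC_succ_iff.2 ⟨(doubleXIso₁ φ _ (by omega)).toLinearEquiv.finrank_eq.trans hN,
    (doubleXIso₀ φ _).toLinearEquiv.finrank_eq.trans hM,
    fun n hn hn' => subsingleton_double_X φ m hn' hn, ?_⟩
  rw [double_d _ _ (by omega)]
  exact ConcreteCategory.bijective_of_isIso _

end Double

section PDouble

variable {A B : ℝ≥0 ⥤ ModuleCat ℚ} (δ : A ⟶ B) (m : ℕ)

noncomputable abbrev pdouble : PCC :=
  doubleFunctor (ComplexShape.up_mk m (m + 1) rfl) (by omega) δ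

variable {δ m} {s : ℝ≥0} {T : ℝ≥0∞}

lemma isPSphere_pdouble (hsT : (s : ℝ≥0∞) < T) (hA : IsIntervalModule A T)
    (hB : IsIntervalModule B s) (hδ : ∀ r : ℝ≥0, T ≤ r → Function.Bijective (δ.app r)) :
    IsPSphere (pdouble δ m) s T (m + 1) := by
  refine ⟨fun r hr => ?_, fun r _ hr => ?_, fun r hr => ?_, fun a b h ha hab => ?_⟩
  · have := hA.subsingleton r ((ENNReal.coe_lt_coe.2 hr).trans hsT)
    have := hB.subsingleton r (ENNReal.coe_lt_coe.2 hr)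
    exact subsingleton_double_X_of_subsingleton _ m
  · have := hA.subsingleton r hr
    exact isSphereC_double _ m (hB.finrank_eq_one r (ENNReal.coe_le_coe.2 ‹_›))
  · exact isDiskC_double _ m (hA.finrank_eq_one r hr) (hB.finrank_eq_one r (hsT.le.trans hr))
      (hδ r hr)
  · have := hB.isIso_map a b h (ENNReal.coe_le_coe.2 ha)
    have : IsIso (A.map (homOfLE h)) := by
      rcases hab with hb | ha
      · have hb' := hA.subsingleton b hb
        have ha' := hA.subsingleton a ((ENNReal.coe_le_coe.2 h).trans_lt hb)
        exact isIso_of_source_target_iso_zero _ (ModuleCat.isZero_of_subsingleton _).isoZero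
          (ModuleCat.isZero_of_subsingleton _).isoZero
      · exact hA.isIso_map a b h ha
    infer_instance

lemma isPDisk_pdouble_id (hB : IsIntervalModule B s) : IsPDisk (pdouble (𝟙 B) m) s (m + 1) := by
  refine ⟨fun r hr => ?_, fun r hr => ?_, fun a b h ha => ?_⟩
  · have := hB.subsingleton r (ENNReal.coe_lt_coe.2 hr)
    exact subsingleton_double_X_of_subsingleton _ m
  · have := hB.finrank_eq_one r (ENNReal.coe_le_coe.2 hr)
    exact isDiskC_double _ m this this (ConcreteCategory.bijective_of_isIso _)
  · have := hB.isIso_map a b h (ENNReal.coe_le_coe.2 ha)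
    infer_instance

end PDouble

def sphereDiskInclusions : MorphismProperty PCC := fun S D i =>
  ∃ (s : ℝ≥0) (t : ℝ≥0∞) (k : ℕ), (s : ℝ≥0∞) < t ∧ IsSphereDiskIncl S D s t k i

section SphereInclusions

variable {V Ds : PCC} (j : V ⟶ Ds) (q : ℕ)

/-- `S_{[s,T)}^{q+2} ↪ D_s^{q+2}`, in degrees `q + 1` and `q + 2`. -/
noncomputable def upperSphereIncl :
    pdouble (functorXMap j (q + 1)) (q + 1) ⟶ pdouble (𝟙 (functorX Ds (q + 1))) (q + 1) :=
  mkHomFromDoubleFunctor _ _ (functorXMap j (q + 1) ≫ (doubleFunctorXIso₀ _ _ _).inv)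
    (doubleFunctorXIso₁ _ _ _).inv (fun r => by simp [double_d])
    (fun r k _ => by simp [double_d_eq_zero₀ _ _ _ _ (show q + 1 + 1 ≠ q + 1 by omega)])

/-- `S_{[s,T)}^{q+1} ↪ D_s^{q+1}`, in degrees `q` and `q + 1`. -/
noncomputable def lowerSphereIncl (hDs : ∀ r, (Ds.obj r).d (q + 1) (q + 1 + 1) = 0) :
    pdouble (functorDMap j q (q + 1)) q ⟶ Ds :=
  mkHomFromDoubleFunctor _ _ (functorXMap j q) (𝟙 _) (fun r => by simp)
    (fun r k hk => by obtain rfl : q + 1 + 1 = k := hk; simpa using hDs r)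

end SphereInclusions

section Lifting

variable {s : ℝ≥0} {T : ℝ≥0∞} {q : ℕ} {V Ds : PCC} {j : V ⟶ Ds}
  (hsT : (s : ℝ≥0∞) < T) (hV : IsPDiskFrom V T (q + 1)) (hDs : IsPDiskFrom Ds s (q + 1))
  (hj : ∀ r : ℝ≥0, T ≤ r → IsIso (j.app r))
include hsT hV hDs hj

lemma upperSphereIncl_mem : sphereDiskInclusions (upperSphereIncl j q) := by
  refine ⟨s, T, q + 1 + 1, hsT, isPSphere_pdouble hsT hV.isIntervalModule_X_succ
    hDs.isIntervalModule_X_succ (fun r hr => ?_), isPDisk_pdouble_id hDs.isIntervalModule_X_succ,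
    fun _ r _ _ => ?_, fun r hr => ?_⟩
  · have := hj r hr
    exact ConcreteCategory.bijective_of_isIso _
  · simp only [upperSphereIncl, mkHomFromDoubleFunctor_app_f₁]
    exact (ConcreteCategory.bijective_of_isIso _).1
  · have := hj r hr
    have : IsIso (((upperSphereIncl j q).app r).f (q + 1)) := by
      simp only [upperSphereIncl, mkHomFromDoubleFunctor_app_f₀, NatTrans.comp_app]; infer_instance
    have : IsIso (((upperSphereIncl j q).app r).f (q + 1 + 1)) := by
      simp only [upperSphereIncl, mkHomFromDoubleFunctor_app_f₁]; infer_instance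
    exact isIso_of_isIso_f_of_isZero _ (isZero_double_X _ (ComplexShape.up_mk _ _ rfl))
      (isZero_double_X _ (ComplexShape.up_mk _ _ rfl))

lemma lowerSphereIncl_mem : sphereDiskInclusions (lowerSphereIncl j q hDs.d_succ_eq_zero) := by
  refine ⟨s, T, q + 1, hsT, isPSphere_pdouble hsT hV.isIntervalModule_X
    hDs.isIntervalModule_X_succ (fun r hr => ?_), isPDiskFrom_coe_iff.1 hDs,
    fun _ r _ _ => ?_, fun r hr => ?_⟩
  · have := hj r hr
    have := (ConcreteCategory.isIso_iff_bijective _).2 (hV.bijective_d hr)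
    exact ConcreteCategory.bijective_of_isIso ((V.obj r).d q (q + 1) ≫ (j.app r).f (q + 1))
  · simp only [lowerSphereIncl, mkHomFromDoubleFunctor_app_f₁]
    exact (ConcreteCategory.bijective_of_isIso _).1
  · have := hj r hr
    have : IsIso (((lowerSphereIncl j q hDs.d_succ_eq_zero).app r).f q) := by
      simp only [lowerSphereIncl, mkHomFromDoubleFunctor_app_f₀]; infer_instance
    have : IsIso (((lowerSphereIncl j q hDs.d_succ_eq_zero).app r).f (q + 1)) := by
      simp only [lowerSphereIncl, mkHomFromDoubleFunctor_app_f₁]; infer_instance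
    exact isIso_of_isIso_f_of_isZero _ (isZero_double_X _ (ComplexShape.up_mk _ _ rfl))
      (fun n hn hn' => hDs.isZero_X r hn hn')

variable {X Y : PCC} {f : X ⟶ Y} {u : V ⟶ X} {v : Ds ⟶ Y}

lemma exists_cocycle_lift_X_succ (hf : sphereDiskInclusions.rlp f) (sq : CommSq u j f v) :
    ∃ ξ : functorX Ds (q + 1) ⟶ functorX X (q + 1),
      (∀ r, (j.app r).f (q + 1) ≫ ξ.app r = (u.app r).f (q + 1)) ∧
      (∀ r, ξ.app r ≫ (f.app r).f (q + 1) = (v.app r).f (q + 1)) ∧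
      (∀ r, ξ.app r ≫ (X.obj r).d (q + 1) (q + 1 + 1) = 0) := by
  let top : pdouble (functorXMap j (q + 1)) (q + 1) ⟶ X :=
    mkHomFromDoubleFunctor _ _ (functorXMap u (q + 1)) 0
      (fun r => by simp [hV.d_succ_eq_zero r]) (by simp)
  let bot : pdouble (𝟙 (functorX Ds (q + 1))) (q + 1) ⟶ Y :=
    mkHomFromDoubleFunctor _ _ (functorXMap v (q + 1))
      (functorXMap v (q + 1) ≫ functorD Y (q + 1) (q + 1 + 1)) (by simp)
      (by simp [hDs.d_succ_eq_zero])
  have sq' : CommSq top (upperSphereIncl j q) f bot := ⟨doubleFunctor_hom_ext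
    (fun r => by simpa [top, bot, upperSphereIncl] using congr_hom (congr_app sq.w r) (q + 1))
    (fun r => by simp [top, bot, upperSphereIncl, hDs.d_succ_eq_zero r])⟩
  have := hf _ (upperSphereIncl_mem hsT hV hDs hj)
  obtain ⟨l, hl, hr⟩ : ∃ l, upperSphereIncl j q ≫ l = top ∧ l ≫ f = bot :=
    ⟨sq'.lift, sq'.fac_left, sq'.fac_right⟩
  refine ⟨(doubleFunctorXIso₀ _ _ _).inv ≫ functorXMap l (q + 1), ?_, ?_, ?_⟩
  · intro r
    simpa [top, upperSphereIncl] using congr_hom (congr_app hl r) (q + 1)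
  · intro r
    have h0 := congr_hom (congr_app hr r) (q + 1)
    simp [bot] at h0
    simp [h0]
  · intro r
    have h0 := congr_hom (congr_app hl r) (q + 1 + 1)
    simp [top, upperSphereIncl] at h0
    simp [h0]

lemma hasLiftingProperty_of_isPDiskFrom (hf : sphereDiskInclusions.rlp f) :
    HasLiftingProperty j f := by
  refine ⟨fun {u v} sq => ?_⟩
  obtain ⟨ξ, hξj, hξf, hξd⟩ := exists_cocycle_lift_X_succ hsT hV hDs hj hf sq
  let top : pdouble (functorDMap j q (q + 1)) q ⟶ X :=
    mkHomFromDoubleFunctor _ _ (functorXMap u q) ξ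
      (fun r => by simp [hξj r])
      (fun r _ hk => by obtain rfl := hk; exact hξd r)
  have sq' : CommSq top (lowerSphereIncl j q hDs.d_succ_eq_zero) f v := ⟨doubleFunctor_hom_ext
    (fun r => by simpa [top, lowerSphereIncl] using congr_hom (congr_app sq.w r) q)
    (fun r => by simp [top, lowerSphereIncl, hξf r])⟩
  have := hf _ (lowerSphereIncl_mem hsT hV hDs hj)
  obtain ⟨m, hm, hmf⟩ : ∃ m, lowerSphereIncl j q hDs.d_succ_eq_zero ≫ m = top ∧ m ≫ f = v :=
    ⟨sq'.lift, sq'.fac_left, sq'.fac_right⟩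
  refine ⟨⟨⟨m, ?_, hmf⟩⟩⟩
  ext r n : 3
  by_cases hn : n = q
  · subst hn
    simpa [top, lowerSphereIncl] using congr_hom (congr_app hm r) n
  by_cases hn' : n = q + 1
  · subst hn'
    have h0 := congr_hom (congr_app hm r) (q + 1)
    simp [top, lowerSphereIncl] at h0
    simp [h0, hξj r]
  exact (hV.isZero_X r hn hn').eq_of_src _ _

end Lifting

lemma IsZeroP.isZero {Z : PCC} (hZ : IsZeroP Z) : IsZero Z :=
  Functor.isZero _ fun r => (IsZero.iff_id_eq_zero _).2 <| by
    ext n : 1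
    have := hZ r n
    exact (ModuleCat.isZero_of_subsingleton _).eq_of_src _ _

lemma IsPDisk.isZeroP {D : PCC} {s : ℝ≥0} (hD : IsPDisk D s 0) : IsZeroP D := fun r n => by
  rcases lt_or_ge r s with hr | hr
  · exact hD.1 r hr n
  · exact isDiskC_zero_iff.1 (hD.2.1 r hr) n

lemma hasLiftingProperty_of_isZero {C : Type*} [Category* C] [HasZeroMorphisms C]
    [HasZeroObject C] {S D X Y : C} (i : S ⟶ D) (f : X ⟶ Y) (hS : IsZero S) (hD : IsZero D) :
    HasLiftingProperty i f :=
  have := isIso_of_source_target_iso_zero i hS.isoZero hD.isoZero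
  inferInstance

/-- every morphism of persistent cochain complexes with the right lifting
property with respect to the generating set
`I = {S_{[s,t)}^k ↪ D_s^k : k ∈ ℕ, 0 ≤ s < t ≤ ∞}` also has the right lifting property
with respect to `J = {D_t^k → D_s^k : 0 ≤ s < t < ∞} ∪ {0 → D_s^k : s ≥ 0}`. -/
theorem stmt15 (X Y : PCC) (f : X ⟶ Y)
    (hI : ∀ (s : ℝ≥0) (t : ℝ≥0∞) (k : ℕ) (S D : PCC) (i : S ⟶ D),
      (s : ℝ≥0∞) < t → IsSphereDiskIncl S D s t k i → HasLiftingProperty i f) :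
    (∀ (s t : ℝ≥0) (k : ℕ) (Dt Ds : PCC) (i : Dt ⟶ Ds), s < t →
      IsDiskIncl Dt Ds s t k i → HasLiftingProperty i f) ∧
    (∀ (s : ℝ≥0) (k : ℕ) (Z D : PCC), IsZeroP Z → IsPDisk D s k →
      ∀ i : Z ⟶ D, HasLiftingProperty i f) := by
  have hf : sphereDiskInclusions.rlp f := fun _ _ i ⟨s, t, k, hst, hi⟩ => hI s t k _ _ i hst hi
  refine ⟨fun s t k Dt Ds i hst ⟨_, hDt, hDs, hi⟩ => ?_, fun s k Z D hZ hD i => ?_⟩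
  · cases k with
    | zero => exact hasLiftingProperty_of_isZero i f hDt.isZeroP.isZero hDs.isZeroP.isZero
    | succ q =>
      exact hasLiftingProperty_of_isPDiskFrom (ENNReal.coe_lt_coe.2 hst)
        (isPDiskFrom_coe_iff.2 hDt) (isPDiskFrom_coe_iff.2 hDs)
        (fun r hr => hi r (ENNReal.coe_le_coe.1 hr)) hf
  · cases k with
    | zero => exact hasLiftingProperty_of_isZero i f hZ.isZero hD.isZeroP.isZero
    | succ q =>
      exact hasLiftingProperty_of_isPDiskFrom ENNReal.coe_lt_top (hZ.isPDiskFrom_top _)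
        (isPDiskFrom_coe_iff.2 hD) (fun r hr => absurd hr (by simp)) hf
end

section
/- The quotient map q : D_s^k → D_s^k / D_t^k of persistent cochain complexes (for s < t < u and k ≥ 1) is pointwise surjective but does not have the right lifting property with respect to the map D_t^k → D_s^k: the lifting problem given by the zero map D_t^k → D_s^k on top and q : D_s^k → D_s^k/D_t^k on the bottom admits no lift. -/
/-!
A lift `l` would be a natural endomorphism of `D_s^k` that is the identity at time `s`
(since `q` is invertible there) and zero at time `t` (since `D_t^k ↪ D_s^k` is invertible
there). Naturality along the monomorphism `D_s^k(s) → D_s^k(t)` then forces `𝟙 = 0` on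
`D_s^k(s) = D^k`, which is nonzero for `k ≥ 1`.
-/

open CategoryTheory CategoryTheory.Limits NNReal
open scoped ENNReal

/-- The quotient `D_s^k / D_t^k`: the disk complex `D^k` on `[s,t)`, zero elsewhere. -/
def IsQuotDisk (Q : PCC) (s t : ℝ≥0) (k : ℕ) : Prop :=
  (∀ r : ℝ≥0, r < s ∨ t ≤ r → ∀ n, Subsingleton ((Q.obj r).X n)) ∧
  (∀ r : ℝ≥0, s ≤ r → r < t → IsDiskC (Q.obj r) k) ∧
  (∀ a b : ℝ≥0, ∀ h : a ≤ b, s ≤ a → b < t → IsIso (Q.map (homOfLE h)))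

theorem CategoryTheory.NatTrans.isZero_obj_of_app_eq_id_of_app_eq_zero
    {J C : Type*} [Category J] [Category C] [Preadditive C] {F : J ⥤ C} (l : F ⟶ F)
    {a b : J} (f : a ⟶ b) [Mono (F.map f)] (ha : l.app a = 𝟙 _) (hb : l.app b = 0) :
    IsZero (F.obj a) := by
  refine (IsZero.iff_id_eq_zero _).2 ((cancel_mono (F.map f)).1 ?_)
  rw [← ha, ← l.naturality f, hb, comp_zero, zero_comp]

theorem HomologicalComplex.surjective_f_of_isIso {R ι : Type*} [Ring R] {c : ComplexShape ι}
    {C D : HomologicalComplex (ModuleCat R) c} (f : C ⟶ D) [IsIso f] (n : ι) :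
    Function.Surjective (f.f n) :=
  (ConcreteCategory.bijective_of_isIso (f.f n)).2

theorem IsDiskC.not_isZero {C : CC} {k : ℕ} (hC : IsDiskC C k) (hk : k ≠ 0) : ¬ IsZero C := by
  intro hzero
  have : Subsingleton (C.X k) :=
    ModuleCat.isZero_iff_subsingleton.1 ((HomologicalComplex.eval _ _ k).map_isZero hzero)
  rw [IsDiskC, if_neg hk, Module.finrank_zero_of_subsingleton] at hC
  exact zero_ne_one hC.1

theorem IsQuotDisk.surjective_app_f {Ds Q : PCC} {s t : ℝ≥0} {k : ℕ} (hQ : IsQuotDisk Q s t k)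
    (q : Ds ⟶ Q) (hq : ∀ r : ℝ≥0, s ≤ r → r < t → IsIso (q.app r)) (r : ℝ≥0) (n : ℕ) :
    Function.Surjective ((q.app r).f n) := by
  by_cases hr : s ≤ r ∧ r < t
  · have := hq r hr.1 hr.2
    exact HomologicalComplex.surjective_f_of_isIso (q.app r) n
  · have := hQ.1 r (by rw [not_and_or, not_le, not_lt] at hr; exact hr) n
    exact Function.surjective_to_subsingleton _

theorem stmt17_general (s t : ℝ≥0) (hst : s < t) (k : ℕ) (hk : 1 ≤ k)
    (Dt Ds Q : PCC) (i : Dt ⟶ Ds) (hi : IsDiskIncl Dt Ds s t k i)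
    (q : Ds ⟶ Q) (hQ : IsQuotDisk Q s t k)
    (hq : ∀ r : ℝ≥0, s ≤ r → r < t → IsIso (q.app r)) :
    (∀ (r : ℝ≥0) (n : ℕ), Function.Surjective ((q.app r).f n)) ∧
    ¬ ∃ l : Ds ⟶ Ds, i ≫ l = 0 ∧ l ≫ q = q := by
  obtain ⟨hle, -, hDs, hit⟩ := hi
  refine ⟨hQ.surjective_app_f q hq, ?_⟩
  rintro ⟨l, hil, hlq⟩
  have := hq s le_rfl hst
  have := hit t le_rfl
  have := hDs.2.2 s t hle le_rfl
  have hls : l.app s = 𝟙 _ := (cancel_mono (q.app s)).1 <| by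
    rw [← NatTrans.comp_app, hlq, Category.id_comp]
  have hlt : l.app t = 0 := (cancel_epi (i.app t)).1 <| by
    rw [← NatTrans.comp_app, hil, comp_zero, NatTrans.app_zero]
  exact (hDs.2.1 s le_rfl).not_isZero (by omega)
    (l.isZero_obj_of_app_eq_id_of_app_eq_zero (homOfLE hle) hls hlt)

/-- for `s < t < u` and `k ≥ 1`, the quotient map
`q : D_s^k → D_s^k / D_t^k` is pointwise surjective, but the lifting problem with the
zero map `D_t^k → D_s^k` on top, the inclusion `D_t^k → D_s^k` on the left and `q` on
the right admits no lift; in particular `q` lacks the right lifting property with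
respect to `D_t^k → D_s^k`. -/
theorem stmt17 (s t u : ℝ≥0) (hst : s < t) (htu : t < u) (k : ℕ) (hk : 1 ≤ k)
    (Dt Ds Q : PCC) (i : Dt ⟶ Ds) (hi : IsDiskIncl Dt Ds s t k i)
    (q : Ds ⟶ Q) (hQ : IsQuotDisk Q s t k)
    (hq : ∀ r : ℝ≥0, s ≤ r → r < t → IsIso (q.app r)) :
    (∀ (r : ℝ≥0) (n : ℕ), Function.Surjective ((q.app r).f n)) ∧
    ¬ ∃ l : Ds ⟶ Ds, i ≫ l = 0 ∧ l ≫ q = q :=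
  stmt17_general s t hst k hk Dt Ds Q i hi q hQ hq
end

section
/- Let X be a persistent cochain complex and consider a pushout square in persistent cochain complexes attaching a disk along a disk: the pushout of D_s^k ← D_t^k → X (where D_t^k → D_s^k is the canonical inclusion for s ≤ t and D_t^k → X is any map). Then the induced map X → X' to the pushout is a pointwise quasi-isomorphism. -/
open CategoryTheory CategoryTheory.Limits NNReal
open scoped ENNReal

/-! Evaluation at `r` preserves pushouts. For `t ≤ r` the map `D_t^k(r) → D_s^k(r)` is an
isomorphism, hence so is its pushout `X(r) → X'(r)`. For `r < t` we have `D_t^k(r) = 0`, so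
`X'(r) ≅ D_s^k(r) ⊞ X(r)`, and `D_s^k(r)` is acyclic, so its summand contributes no
cohomology. -/

open HomologicalComplex

lemma CategoryTheory.Functor.isIso_map_biprod_inr_of_isZero {C D : Type*} [Category C]
    [Category D] [Preadditive C] [Preadditive D] [HasBinaryBiproducts C] (F : C ⥤ D)
    [F.Additive] {A B : C} (hA : IsZero (F.obj A)) :
    IsIso (F.map (biprod.inr : B ⟶ A ⊞ B)) := by
  refine ⟨F.map biprod.snd, by rw [← F.map_comp, biprod.inr_snd, F.map_id], ?_⟩
  have hfst_inl : F.map (biprod.fst ≫ biprod.inl : A ⊞ B ⟶ A ⊞ B) = 0 := by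
    rw [F.map_comp, hA.eq_zero_of_src (F.map biprod.inl), comp_zero]
  rw [← F.map_comp, ← add_zero (F.map _), ← hfst_inl, ← F.map_add, add_comm, biprod.total,
    F.map_id]

section

variable {C ι : Type*} [Category C] [Abelian C] {c : ComplexShape ι}

lemma HomologicalComplex.quasiIso_biprod_inr_of_acyclic {A B : HomologicalComplex C c}
    (hA : A.Acyclic) : QuasiIso (biprod.inr : B ⟶ A ⊞ B) :=
  (quasiIso_iff _).2 fun n => (quasiIsoAt_iff_isIso_homologyMap _ _).2 <|
    (homologyFunctor C c n).isIso_map_biprod_inr_of_isZero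
      ((exactAt_iff_isZero_homology _ _).1 (hA n))

lemma CategoryTheory.IsPushout.quasiIso_inr_of_isZero_of_acyclic
    {Z A B P : HomologicalComplex C c} {f : Z ⟶ A} {g : Z ⟶ B} {inl : A ⟶ P} {inr : B ⟶ P}
    (h : IsPushout f g inl inr) (hZ : IsZero Z) (hA : A.Acyclic) : QuasiIso inr := by
  have hbiprod : IsPushout f g biprod.inl biprod.inr := by
    rw [hZ.eq_of_src f (hZ.isInitial.to _), hZ.eq_of_src g (hZ.isInitial.to _)]
    exact IsPushout.of_is_coproduct (BinaryBiproduct.isColimit A B) hZ.isInitial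
  rw [← quasiIso_iff_comp_right inr (h.isoIsPushout _ _ hbiprod).hom, h.inr_isoIsPushout_hom]
  exact quasiIso_biprod_inr_of_acyclic hA

end

lemma HomologicalComplex.isZero_of_subsingleton_X {R ι : Type*} [Ring R] {c : ComplexShape ι}
    {K : HomologicalComplex (ModuleCat R) c} (h : ∀ n, Subsingleton (K.X n)) : IsZero K := by
  rw [IsZero.iff_id_eq_zero]
  ext n : 1
  exact (ModuleCat.isZero_iff_subsingleton.2 (h n)).eq_of_src _ _

lemma IsDiskC.acyclic {C : CC} {k : ℕ} (h : IsDiskC C k) : C.Acyclic := by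
  unfold IsDiskC at h
  split_ifs at h with hk
  · exact acyclic_of_isZero _ (isZero_of_subsingleton_X h)
  obtain ⟨-, -, hzero, hd⟩ := h
  obtain ⟨m, rfl⟩ := Nat.exists_eq_add_one_of_ne_zero hk
  intro n
  rcases eq_or_ne n (m + 1) with rfl | hn
  · rw [C.exactAt_iff' m (m + 1) (m + 2) (by simp) (by simp), ShortComplex.moduleCat_exact_iff]
    exact fun x _ => hd.2 x
  rcases eq_or_ne n m with rfl | hn'
  · rw [C.exactAt_iff' _ n (n + 1) rfl (by simp), ShortComplex.moduleCat_exact_iff]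
    refine fun x hx => ⟨0, ?_⟩
    have hx0 : x = 0 := hd.1 (hx.trans (map_zero _).symm)
    simp [hx0]
  · exact ExactAt.of_isZero (ModuleCat.isZero_iff_subsingleton.2 (hzero n hn hn'))

namespace IsPDisk

variable {D : PCC} {s : ℝ≥0} {k : ℕ}

lemma isZero_obj_of_lt (h : IsPDisk D s k) {r : ℝ≥0} (hr : r < s) : IsZero (D.obj r) :=
  isZero_of_subsingleton_X (h.1 r hr)

lemma acyclic_obj (h : IsPDisk D s k) (r : ℝ≥0) : (D.obj r).Acyclic := by
  rcases lt_or_ge r s with hr | hr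
  · exact acyclic_of_isZero _ (h.isZero_obj_of_lt hr)
  · exact (h.2.1 r hr).acyclic

end IsPDisk

theorem stmt18_general (s t : ℝ≥0) (k : ℕ) (Dt Ds X : PCC) (i : Dt ⟶ Ds)
    (hi : IsDiskIncl Dt Ds s t k i) (g : Dt ⟶ X) :
    ∀ r : ℝ≥0, QuasiIso ((pushout.inr i g).app r) := by
  obtain ⟨-, hDt, hDs, hiso⟩ := hi
  intro r
  have hsq : IsPushout (i.app r) (g.app r) ((pushout.inl i g).app r)
      ((pushout.inr i g).app r) :=
    (IsPushout.of_hasPushout i g).map ((evaluation ℝ≥0 CC).obj r)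
  rcases le_or_gt t r with htr | hrt
  · have := hiso r htr
    have := hsq.isIso_inr_of_isIso
    infer_instance
  · exact hsq.quasiIso_inr_of_isZero_of_acyclic (hDt.isZero_obj_of_lt hrt) (hDs.acyclic_obj r)

/-- attaching a disk along a disk is a pointwise quasi-isomorphism: for
the pushout of `D_s^k ← D_t^k → X` (with `D_t^k → D_s^k` the canonical inclusion for
`s ≤ t` and `D_t^k → X` any map), the induced map `X → X'` is a pointwise
quasi-isomorphism. -/
theorem stmt18 (s t : ℝ≥0) (hst : s ≤ t) (k : ℕ) (Dt Ds X : PCC) (i : Dt ⟶ Ds)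
    (hi : IsDiskIncl Dt Ds s t k i) (g : Dt ⟶ X) :
    ∀ r : ℝ≥0, QuasiIso ((pushout.inr i g).app r) :=
  stmt18_general s t k Dt Ds X i hi g
end
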